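/- arXiv:1801.05567 — 11 statements merged into one kernel-verified Lean document; each statement's English description precedes it below -/
import Mathlib

section
/- Let F : ℝ → ℝ be a continuous CDF (monotone nondecreasing, right-continuous, with limits 0 at −∞ and 1 at +∞) satisfying F(z) = 0 for all z ≤ 0, and let Δ > 0 with 0 < F(Δ) < 1. For each integer M ≥ 1 let p_M(t) = (1/2)·((1 − F(t))^M + 1 − (1 − F(t − Δ))^M) and suppose θ_M ∈ [Δ, ∞) minimizes p_M over [Δ, ∞) and θ_M → Δ as M → ∞. Set P_M = p_M(θ_M). Then lim_{M→∞} (−log P_M)/M = −log(1 − F(Δ)). -/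
open Filter Topology Set

/-- Diversity gain of the first-arrival detector: if the ML-optimal thresholds
`θ M` converge to `Δ`, then `(−log P_M)/M → −log(1 − F(Δ))`. -/
theorem first_arrival_detector_diversity_gain
    (F : ℝ → ℝ)
    (hF_mono : Monotone F)
    (hF_cont : Continuous F)
    (hF_bot : Tendsto F atBot (𝓝 0))
    (hF_top : Tendsto F atTop (𝓝 1))
    (hF_zero : ∀ z ≤ (0 : ℝ), F z = 0)
    (Δ : ℝ) (hΔ : 0 < Δ) (hFΔ_pos : 0 < F Δ) (hFΔ_lt : F Δ < 1)
    (θ : ℕ → ℝ)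
    (hθ_mem : ∀ M : ℕ, 1 ≤ M → θ M ∈ Ici Δ)
    (hθ_min : ∀ M : ℕ, 1 ≤ M → ∀ t ∈ Ici Δ,
      (1 / 2) * ((1 - F (θ M)) ^ M + 1 - (1 - F (θ M - Δ)) ^ M)
        ≤ (1 / 2) * ((1 - F t) ^ M + 1 - (1 - F (t - Δ)) ^ M))
    (hθ_lim : Tendsto θ atTop (𝓝 Δ)) :
    Tendsto
      (fun M : ℕ =>
        (-Real.log ((1 / 2) * ((1 - F (θ M)) ^ M + 1 - (1 - F (θ M - Δ)) ^ M))) / (M : ℝ))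
      atTop
      (𝓝 (-Real.log (1 - F Δ))) := by
  have hF0 : F 0 = 0 := hF_zero 0 le_rfl
  have hFnonneg : ∀ x, 0 ≤ F x := by
    intro x
    rcases le_or_gt x 0 with h | h
    · rw [hF_zero x h]
    · rw [← hF0]; exact hF_mono h.le
  have hFle1 : ∀ x, F x ≤ 1 := fun x => hF_mono.ge_of_tendsto hF_top x
  set p : ℕ → ℝ :=
    fun M => (1 / 2) * ((1 - F (θ M)) ^ M + 1 - (1 - F (θ M - Δ)) ^ M) with hp
  have h1FΔ : 0 < 1 - F Δ := by linarith
  have ha : Tendsto (fun M => 1 - F (θ M)) atTop (𝓝 (1 - F Δ)) :=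
    tendsto_const_nhds.sub ((hF_cont.tendsto Δ).comp hθ_lim)
  have hev : ∀ᶠ M : ℕ in atTop, 0 < 1 - F (θ M) := ha.eventually (eventually_gt_nhds h1FΔ)
  -- key bounds
  have key : ∀ᶠ M : ℕ in atTop,
      (1 / 2) * (1 - F (θ M)) ^ M ≤ p M ∧ p M ≤ (1 / 2) * (1 - F Δ) ^ M := by
    filter_upwards [eventually_ge_atTop 1] with M hM
    constructor
    · have h1 : F (θ M - Δ) ≤ 1 := hFle1 _
      have h2 : 0 ≤ F (θ M - Δ) := hFnonneg _
      have h3 : (1 - F (θ M - Δ)) ^ M ≤ 1 := pow_le_one₀ (by linarith) (by linarith)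
      simp only [hp]; nlinarith
    · have h := hθ_min M hM Δ self_mem_Ici
      rw [sub_self, hF0] at h
      have h4 : ((1 : ℝ) - 0) ^ M = 1 := by norm_num
      rw [h4] at h
      simp only [hp]; linarith
  -- squeeze
  have hL : Tendsto (fun M : ℕ => Real.log 2 / (M : ℝ) - Real.log (1 - F Δ)) atTop
      (𝓝 (-Real.log (1 - F Δ))) := by
    have := (tendsto_const_div_atTop_nhds_zero_nat (Real.log 2)).sub_const
      (Real.log (1 - F Δ))
    simpa using this
  have hU : Tendsto (fun M : ℕ => Real.log 2 / (M : ℝ) - Real.log (1 - F (θ M))) atTop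
      (𝓝 (-Real.log (1 - F Δ))) := by
    have hlog : Tendsto (fun M : ℕ => Real.log (1 - F (θ M))) atTop
        (𝓝 (Real.log (1 - F Δ))) :=
      ((Real.continuousAt_log (ne_of_gt h1FΔ)).tendsto).comp ha
    have := (tendsto_const_div_atTop_nhds_zero_nat (Real.log 2)).sub hlog
    simpa using this
  refine tendsto_of_tendsto_of_tendsto_of_le_of_le' hL hU ?_ ?_
  · filter_upwards [key, hev, eventually_ge_atTop 1] with M hkey hpos hM
    have hMpos : (0 : ℝ) < M := by exact_mod_cast hM
    have hpM : 0 < p M := lt_of_lt_of_le (by positivity) hkey.1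
    have hlog : Real.log (p M) ≤ Real.log ((1 / 2) * (1 - F Δ) ^ M) :=
      Real.log_le_log hpM hkey.2
    rw [Real.log_mul (by norm_num) (pow_ne_zero _ (ne_of_gt h1FΔ)), Real.log_pow,
      show Real.log (1 / 2 : ℝ) = -Real.log 2 by rw [one_div, Real.log_inv]] at hlog
    show Real.log 2 / ↑M - Real.log (1 - F Δ) ≤ (-Real.log (p M)) / ↑M
    have h6 : (Real.log 2 - ↑M * Real.log (1 - F Δ)) / ↑M
        = Real.log 2 / ↑M - Real.log (1 - F Δ) := by field_simp
    rw [← h6]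
    gcongr
    linarith
  · filter_upwards [key, hev, eventually_ge_atTop 1] with M hkey hpos hM
    have hMpos : (0 : ℝ) < M := by exact_mod_cast hM
    have hhalf : (0 : ℝ) < (1 / 2) * (1 - F (θ M)) ^ M := by positivity
    have hlog : Real.log ((1 / 2) * (1 - F (θ M)) ^ M) ≤ Real.log (p M) :=
      Real.log_le_log hhalf hkey.1
    rw [Real.log_mul (by norm_num) (pow_ne_zero _ (ne_of_gt hpos)), Real.log_pow,
      show Real.log (1 / 2 : ℝ) = -Real.log 2 by rw [one_div, Real.log_inv]] at hlog
    show (-Real.log (p M)) / ↑M ≤ Real.log 2 / ↑M - Real.log (1 - F (θ M))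
    have h6 : (Real.log 2 - ↑M * Real.log (1 - F (θ M))) / ↑M
        = Real.log 2 / ↑M - Real.log (1 - F (θ M)) := by field_simp
    rw [← h6]
    gcongr
    linarith
end

section
/- Let f : ℝ → ℝ be nonnegative with f(z) = 0 for all z < 0, and suppose f is monotone nonincreasing on [0, ∞) (i.e., the mode of the density is at 0). Let Δ > 0, M ≥ 1, and let y_1, …, y_M ∈ ℝ with y_i > 0 for all i. Then ∏_{i=1}^{M} f(y_i − Δ) < ∏_{i=1}^{M} f(y_i) if and only if ( there exists i with y_i < Δ ) and ( 0 < ∏_{i=1}^{M} f(y_i) ). Consequently, the maximum-likelihood decision between release times 0 and Δ depends on the observations y_1, …, y_M only through whether the first arrival min_i y_i is below Δ, so the ML detector is equivalent to the first-arrival detector. -/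
open Set

/-- When the mode of the delay density is at `0` (i.e. `f` is nonincreasing on `[0,∞)`
and vanishes on negatives), the ML likelihood comparison depends on the observations
only through whether some arrival is below `Δ`: the ML detector is equivalent to the
first-arrival detector. -/
theorem ml_equiv_first_arrival_mode_at_zero
    (f : ℝ → ℝ)
    (hf_nonneg : ∀ z, 0 ≤ f z)
    (hf_zero : ∀ z < (0 : ℝ), f z = 0)
    (hf_anti : AntitoneOn f (Ici 0))
    (Δ : ℝ) (hΔ : 0 < Δ)
    (M : ℕ) (hM : 1 ≤ M)
    (y : Fin M → ℝ) (hy : ∀ i, 0 < y i) :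
    (∏ i, f (y i - Δ)) < (∏ i, f (y i)) ↔
      ((∃ i, y i < Δ) ∧ 0 < ∏ i, f (y i)) := by
  constructor
  · intro h
    have hpos : 0 < ∏ i, f (y i) := by
      refine lt_of_le_of_lt ?_ h
      exact Finset.prod_nonneg fun i _ => hf_nonneg _
    refine ⟨?_, hpos⟩
    by_contra hno
    push_neg at hno
    have hle : (∏ i, f (y i)) ≤ ∏ i, f (y i - Δ) := by
      refine Finset.prod_le_prod (fun i _ => hf_nonneg _) (fun i _ => ?_)
      have h1 : (0:ℝ) ≤ y i - Δ := sub_nonneg.mpr (hno i)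
      exact hf_anti h1 (le_of_lt (hy i)) (by linarith)
    exact absurd h (not_lt.mpr hle)
  · rintro ⟨⟨j, hj⟩, hpos⟩
    have hz : (∏ i, f (y i - Δ)) = 0 := by
      apply Finset.prod_eq_zero (Finset.mem_univ j)
      exact hf_zero _ (by linarith)
    rw [hz]; exact hpos
end

section
/- Let f : ℝ → ℝ be a probability density (nonnegative, measurable, ∫_ℝ f = 1) with f(z) = 0 for all z < 0, and suppose f is monotone nonincreasing on [0, ∞). Let Δ > 0 and F(Δ) = ∫_0^Δ f(t) dt with F(Δ) < 1. Then 1 − F(Δ) is the least element of the set { ∫_Δ^∞ f(y)^s · f(y − Δ)^{1−s} dy : s ∈ [0,1] }, with the minimum attained at s = 1. In particular, the Chernoff information −min_{s∈[0,1]} log ∫_Δ^∞ f(y)^s f(y−Δ)^{1−s} dy equals −log(1 − F(Δ)), so the diversity gains of the ML and FA detectors coincide: D_FA = D_ML = −log(1 − F(Δ)). -/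
open MeasureTheory Set

/-- For a nonincreasing density supported on the nonnegative reals, the Chernoff
integral is minimized at `s = 1` with value `1 − F(Δ)`; hence the diversity gains of
the ML and FA detectors coincide: `D_FA = D_ML = −log(1 − F(Δ))`. -/
theorem chernoff_min_at_one_mode_at_zero
    (f : ℝ → ℝ)
    (hf_nonneg : ∀ z, 0 ≤ f z)
    (hf_meas : Measurable f)
    (hf_int : ∫ z, f z = 1)
    (hf_zero : ∀ z < (0 : ℝ), f z = 0)
    (hf_anti : AntitoneOn f (Ici 0))
    (Δ : ℝ) (hΔ : 0 < Δ)
    (hFΔ : (∫ t in (0 : ℝ)..Δ, f t) < 1) :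
    IsLeast {x : ℝ | ∃ s ∈ Icc (0 : ℝ) 1,
        x = ∫ y in Ioi Δ, f y ^ s * f (y - Δ) ^ (1 - s)}
      (1 - ∫ t in (0 : ℝ)..Δ, f t) ∧
    (∫ y in Ioi Δ, f y ^ (1 : ℝ) * f (y - Δ) ^ (1 - (1 : ℝ)))
      = 1 - ∫ t in (0 : ℝ)..Δ, f t ∧
    (-sInf {x : ℝ | ∃ s ∈ Icc (0 : ℝ) 1,
        x = Real.log (∫ y in Ioi Δ, f y ^ s * f (y - Δ) ^ (1 - s))})
      = -Real.log (1 - ∫ t in (0 : ℝ)..Δ, f t) := by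
  have hInt : Integrable f := by
    by_contra h
    rw [integral_undef h] at hf_int
    norm_num at hf_int
  -- the tail identity : ∫_{Ioi Δ} f = 1 - F(Δ)
  have hIio : ∫ z in Iio (0:ℝ), f z = 0 :=
    setIntegral_eq_zero_of_forall_eq_zero fun x hx => hf_zero x hx
  have hIci : ∫ z in Ici (0:ℝ), f z = 1 := by
    have := integral_add_compl (measurableSet_Ici (a := (0:ℝ))) hInt
    rw [compl_Ici, hIio, add_zero] at this
    rw [this, hf_int]
  have hsplit : ∫ z in Ici (0:ℝ), f z
      = (∫ z in Icc (0:ℝ) Δ, f z) + ∫ z in Ioi Δ, f z := by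
    rw [← Icc_union_Ioi_eq_Ici hΔ.le]
    exact setIntegral_union ((Iic_disjoint_Ioi le_rfl).mono Icc_subset_Iic_self le_rfl) measurableSet_Ioi
      hInt.integrableOn hInt.integrableOn
  have hF : ∫ z in Icc (0:ℝ) Δ, f z = ∫ t in (0:ℝ)..Δ, f t := by
    rw [intervalIntegral.integral_of_le hΔ.le, integral_Icc_eq_integral_Ioc]
  have htail : ∫ y in Ioi Δ, f y = 1 - ∫ t in (0:ℝ)..Δ, f t := by
    rw [hsplit, hF] at hIci; linarith
  -- translated density is integrable
  have hIntShift : Integrable (fun y : ℝ => f (y - Δ)) := hInt.comp_sub_right Δ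
  -- pointwise bounds on Ioi Δ
  have hle : ∀ s ∈ Icc (0:ℝ) 1, ∀ y ∈ Ioi Δ, f y ≤ f y ^ s * f (y - Δ) ^ (1 - s) := by
    rintro s ⟨hs0, hs1⟩ y hy
    have hy' : Δ < y := hy
    have hmem1 : y - Δ ∈ Ici (0:ℝ) := by simp [le_of_lt, sub_pos.mpr hy']
    have hmem2 : y ∈ Ici (0:ℝ) := le_of_lt (hΔ.trans hy')
    have hanti : f y ≤ f (y - Δ) := hf_anti hmem1 hmem2 (by linarith)
    rcases eq_or_lt_of_le (hf_nonneg y) with h0 | hpos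
    · rw [← h0]
      exact mul_nonneg (Real.rpow_nonneg (h0 ▸ le_rfl) _)
        (Real.rpow_nonneg (hf_nonneg _) _)
    · calc f y = f y ^ s * f y ^ (1 - s) := by
            rw [← Real.rpow_add hpos]; norm_num
        _ ≤ f y ^ s * f (y - Δ) ^ (1 - s) :=
            mul_le_mul_of_nonneg_left
              (Real.rpow_le_rpow (hf_nonneg y) hanti (by linarith))
              (Real.rpow_nonneg (hf_nonneg y) s)
  have hub : ∀ s ∈ Icc (0:ℝ) 1, ∀ y ∈ Ioi Δ,
      f y ^ s * f (y - Δ) ^ (1 - s) ≤ f (y - Δ) := by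
    rintro s ⟨hs0, hs1⟩ y hy
    have hy' : Δ < y := hy
    have hanti : f y ≤ f (y - Δ) :=
      hf_anti (by simp [le_of_lt, sub_pos.mpr hy']) (le_of_lt (hΔ.trans hy'))
        (by linarith)
    rcases eq_or_lt_of_le (hf_nonneg (y - Δ)) with h0 | hpos
    · have hfy : f y = 0 := le_antisymm (h0 ▸ hanti) (hf_nonneg y)
      rw [hfy, ← h0]
      rcases eq_or_lt_of_le hs0 with rfl | hs0'
      · simp
      · rw [Real.zero_rpow (ne_of_gt hs0'), zero_mul]
    · calc f y ^ s * f (y - Δ) ^ (1 - s)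
          ≤ f (y - Δ) ^ s * f (y - Δ) ^ (1 - s) :=
            mul_le_mul_of_nonneg_right
              (Real.rpow_le_rpow (hf_nonneg y) hanti hs0)
              (Real.rpow_nonneg hpos.le _)
        _ = f (y - Δ) := by rw [← Real.rpow_add hpos]; norm_num
  -- integrability of the Chernoff integrand
  have hIntegrand : ∀ s ∈ Icc (0:ℝ) 1,
      IntegrableOn (fun y => f y ^ s * f (y - Δ) ^ (1 - s)) (Ioi Δ) := by
    intro s hs
    refine Integrable.mono' (hIntShift.integrableOn)
      ((by fun_prop : Measurable (fun y => f y ^ s * f (y - Δ) ^ (1 - s))).aestronglyMeasurable) ?_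
    filter_upwards [ae_restrict_mem measurableSet_Ioi] with y hy
    rw [Real.norm_eq_abs, abs_of_nonneg
      (mul_nonneg (Real.rpow_nonneg (hf_nonneg _) _) (Real.rpow_nonneg (hf_nonneg _) _))]
    exact hub s hs y hy
  -- lower bound
  have hLB : ∀ s ∈ Icc (0:ℝ) 1,
      (1 - ∫ t in (0:ℝ)..Δ, f t) ≤ ∫ y in Ioi Δ, f y ^ s * f (y - Δ) ^ (1 - s) := by
    intro s hs
    rw [← htail]
    exact setIntegral_mono_on hInt.integrableOn (hIntegrand s hs)
      measurableSet_Ioi (hle s hs)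
  -- value at s = 1
  have hval : (∫ y in Ioi Δ, f y ^ (1:ℝ) * f (y - Δ) ^ (1 - (1:ℝ)))
      = 1 - ∫ t in (0:ℝ)..Δ, f t := by
    rw [← htail]
    simp [Real.rpow_one]
  have hpos : (0:ℝ) < 1 - ∫ t in (0:ℝ)..Δ, f t := by linarith
  have hleast : IsLeast {x : ℝ | ∃ s ∈ Icc (0 : ℝ) 1,
      x = ∫ y in Ioi Δ, f y ^ s * f (y - Δ) ^ (1 - s)}
      (1 - ∫ t in (0:ℝ)..Δ, f t) := by
    constructor
    · exact ⟨1, ⟨zero_le_one, le_rfl⟩, hval.symm⟩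
    · rintro x ⟨s, hs, rfl⟩
      exact hLB s hs
  refine ⟨hleast, hval, ?_⟩
  have hlogleast : IsLeast {x : ℝ | ∃ s ∈ Icc (0 : ℝ) 1,
      x = Real.log (∫ y in Ioi Δ, f y ^ s * f (y - Δ) ^ (1 - s))}
      (Real.log (1 - ∫ t in (0:ℝ)..Δ, f t)) := by
    constructor
    · exact ⟨1, ⟨zero_le_one, le_rfl⟩, by rw [hval]⟩
    · rintro x ⟨s, hs, rfl⟩
      exact Real.log_le_log hpos (hLB s hs)
  rw [hlogleast.csInf_eq]
end

section
/- Let 0 < Δ < τ < ∞ and let F : ℝ → ℝ be a continuous CDF satisfying F(z) = 0 for all z ≤ 0 and F(z) = 1 for all z ≥ τ, with 0 < F(τ − Δ) < 1. For each integer M ≥ 1 let q_M(t) = (1/2)·( F(t − Δ)^M + 1 − F(t)^M ) and suppose ϑ_M ∈ [Δ, τ] minimizes q_M over [Δ, τ] and ϑ_M → τ as M → ∞. Set P_M = q_M(ϑ_M). Then lim_{M→∞} (−log P_M)/M = −log F(τ − Δ). -/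
open Filter Topology Set

/-- Diversity gain of the last-arrival detector: if the ML-optimal thresholds
`ϑ M` converge to `τ`, then `(−log P_M)/M → −log F(τ − Δ)`. -/
theorem last_arrival_detector_diversity_gain
    (Δ τ : ℝ) (hΔ : 0 < Δ) (hΔτ : Δ < τ)
    (F : ℝ → ℝ)
    (hF_mono : Monotone F)
    (hF_cont : Continuous F)
    (hF_zero : ∀ z ≤ (0 : ℝ), F z = 0)
    (hF_one : ∀ z : ℝ, τ ≤ z → F z = 1)
    (hFτΔ_pos : 0 < F (τ - Δ)) (hFτΔ_lt : F (τ - Δ) < 1)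
    (ϑ : ℕ → ℝ)
    (hϑ_mem : ∀ M : ℕ, 1 ≤ M → ϑ M ∈ Icc Δ τ)
    (hϑ_min : ∀ M : ℕ, 1 ≤ M → ∀ t ∈ Icc Δ τ,
      (1 / 2) * ((F (ϑ M - Δ)) ^ M + 1 - (F (ϑ M)) ^ M)
        ≤ (1 / 2) * ((F (t - Δ)) ^ M + 1 - (F t) ^ M))
    (hϑ_lim : Tendsto ϑ atTop (𝓝 τ)) :
    Tendsto
      (fun M : ℕ =>
        (-Real.log ((1 / 2) * ((F (ϑ M - Δ)) ^ M + 1 - (F (ϑ M)) ^ M))) / (M : ℝ))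
      atTop
      (𝓝 (-Real.log (F (τ - Δ)))) := by
  set a := F (τ - Δ) with ha
  have hFτ : F τ = 1 := hF_one τ le_rfl
  -- F (ϑ M - Δ) → a
  have hc : Tendsto (fun M => F (ϑ M - Δ)) atTop (𝓝 a) :=
    (hF_cont.tendsto (τ - Δ)).comp (hϑ_lim.sub_const Δ)
  have hcl : Tendsto (fun M => Real.log (F (ϑ M - Δ))) atTop (𝓝 (Real.log a)) :=
    ((Real.continuousAt_log (ne_of_gt hFτΔ_pos)).tendsto).comp hc
  have hdiv0 : Tendsto (fun M : ℕ => Real.log 2 / (M : ℝ)) atTop (𝓝 0) :=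
    tendsto_const_div_atTop_nhds_zero_nat _
  -- lower and upper comparison sequences
  have hg : Tendsto (fun M : ℕ => Real.log 2 / (M : ℝ) - Real.log a) atTop
      (𝓝 (-Real.log a)) := by
    have := hdiv0.sub (tendsto_const_nhds (x := Real.log a) (f := atTop))
    simpa using this
  have hh : Tendsto (fun M : ℕ => Real.log 2 / (M : ℝ) - Real.log (F (ϑ M - Δ))) atTop
      (𝓝 (-Real.log a)) := by
    have := hdiv0.sub hcl
    simpa using this
  refine tendsto_of_tendsto_of_tendsto_of_le_of_le' hg hh ?_ ?_
  · -- lower bound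
    filter_upwards [eventually_ge_atTop 1, hc.eventually (eventually_gt_nhds hFτΔ_pos)]
      with M hM hcM
    have hMpos : (0 : ℝ) < M := by exact_mod_cast hM
    set P := (1 / 2 : ℝ) * ((F (ϑ M - Δ)) ^ M + 1 - (F (ϑ M)) ^ M) with hP
    have hPlow : (1 / 2 : ℝ) * (F (ϑ M - Δ)) ^ M ≤ P := by
      have h1 : F (ϑ M) ≤ 1 := by
        rw [← hFτ]; exact hF_mono (hϑ_mem M hM).2
      have h0 : 0 ≤ F (ϑ M) := by
        have := hF_zero 0 le_rfl
        rw [← this]; exact hF_mono (le_of_lt ((hΔ.trans_le (hϑ_mem M hM).1)))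
      have h2 : (F (ϑ M)) ^ M ≤ 1 := pow_le_one₀ h0 h1
      rw [hP]; nlinarith
    have hPup : P ≤ (1 / 2 : ℝ) * a ^ M := by
      have := hϑ_min M hM τ ⟨hΔτ.le, le_rfl⟩
      rw [hFτ, one_pow] at this
      rw [hP]; linarith
    have hPpos : 0 < P := lt_of_lt_of_le (by positivity) hPlow
    have hlog : Real.log P ≤ Real.log ((1 / 2 : ℝ) * a ^ M) :=
      Real.log_le_log hPpos hPup
    have heq : Real.log ((1 / 2 : ℝ) * a ^ M) = -Real.log 2 + M * Real.log a := by
      rw [Real.log_mul (by norm_num) (pow_ne_zero M (ne_of_gt hFτΔ_pos)),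
        Real.log_pow, one_div, Real.log_inv]

    rw [heq] at hlog
    have h1 : Real.log 2 - (M : ℝ) * Real.log a ≤ -Real.log P := by linarith
    calc Real.log 2 / (M : ℝ) - Real.log a
        = (Real.log 2 - (M : ℝ) * Real.log a) / M := by field_simp
      _ ≤ -Real.log P / M := by gcongr
  · -- upper bound
    filter_upwards [eventually_ge_atTop 1, hc.eventually (eventually_gt_nhds hFτΔ_pos)]
      with M hM hcM
    have hMpos : (0 : ℝ) < M := by exact_mod_cast hM
    set c := F (ϑ M - Δ) with hcdef
    set P := (1 / 2 : ℝ) * (c ^ M + 1 - (F (ϑ M)) ^ M) with hP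
    have hPlow : (1 / 2 : ℝ) * c ^ M ≤ P := by
      have h1 : F (ϑ M) ≤ 1 := by
        rw [← hFτ]; exact hF_mono (hϑ_mem M hM).2
      have h0 : 0 ≤ F (ϑ M) := by
        have := hF_zero 0 le_rfl
        rw [← this]; exact hF_mono (le_of_lt ((hΔ.trans_le (hϑ_mem M hM).1)))
      have h2 : (F (ϑ M)) ^ M ≤ 1 := pow_le_one₀ h0 h1
      rw [hP]; nlinarith
    have hhalfpos : (0 : ℝ) < (1 / 2 : ℝ) * c ^ M := by positivity
    have hlog : Real.log ((1 / 2 : ℝ) * c ^ M) ≤ Real.log P :=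
      Real.log_le_log hhalfpos hPlow
    have heq : Real.log ((1 / 2 : ℝ) * c ^ M) = -Real.log 2 + M * Real.log c := by
      rw [Real.log_mul (by norm_num) (pow_ne_zero M (ne_of_gt hcM)),
        Real.log_pow, one_div, Real.log_inv]

    rw [heq] at hlog
    have h1 : -Real.log P ≤ Real.log 2 - (M : ℝ) * Real.log c := by linarith
    calc -Real.log P / (M : ℝ)
        ≤ (Real.log 2 - (M : ℝ) * Real.log c) / M := by gcongr
      _ = Real.log 2 / (M : ℝ) - Real.log c := by field_simp
end

section
/- Let 0 < Δ < τ < ∞ and let f : ℝ → ℝ be a probability density (nonnegative, measurable, ∫_ℝ f = 1) with f(z) = 0 for z ≤ 0 and for z > τ, and suppose f is monotone nondecreasing on (0, τ]. Let F(z) = ∫_0^z f(t) dt and assume 0 < F(τ − Δ). Then F(τ − Δ) is the least element of the set { ∫_Δ^τ f(y)^s · f(y − Δ)^{1−s} dy : s ∈ [0,1] }, with the minimum attained at s = 0. In particular, the Chernoff information −min_{s∈[0,1]} log ∫_Δ^τ f(y)^s f(y−Δ)^{1−s} dy equals −log F(τ − Δ), so the diversity gains of the ML and LA detectors coincide: D_LA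 = D_ML = −log F(τ − Δ). -/
open MeasureTheory Set

lemma chernoff_pointwise (a b s : ℝ) (ha : 0 ≤ a) (hab : a ≤ b)
    (hs : 0 ≤ s) (hs1 : s ≤ 1) :
    a ≤ b ^ s * a ^ (1 - s) ∧ b ^ s * a ^ (1 - s) ≤ b := by
  rcases ha.lt_or_eq with hpos | hzero
  · have hb : 0 < b := hpos.trans_le hab
    constructor
    · have h1 : a = a ^ s * a ^ (1 - s) := by
        rw [← Real.rpow_add hpos]; simp
      nth_rewrite 1 [h1]
      exact mul_le_mul_of_nonneg_right (Real.rpow_le_rpow ha hab hs)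
        (Real.rpow_nonneg ha _)
    · have h2 : b ^ s * b ^ (1 - s) = b := by
        rw [← Real.rpow_add hb]; simp
      calc b ^ s * a ^ (1 - s) ≤ b ^ s * b ^ (1 - s) :=
            mul_le_mul_of_nonneg_left (Real.rpow_le_rpow ha hab (by linarith))
              (Real.rpow_nonneg hb.le _)
        _ = b := h2
  · subst hzero
    by_cases h1 : s = 1
    · subst h1
      simp only [Real.rpow_one, sub_self, Real.rpow_zero, mul_one]
      exact ⟨hab, le_refl _⟩
    · have hz : (0:ℝ) ^ (1 - s) = 0 :=
        Real.zero_rpow (fun h => h1 (by linarith [sub_eq_zero.mp h]))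
      rw [hz, mul_zero]
      exact ⟨le_refl 0, hab⟩

/-- For a nondecreasing density supported on `(0, τ]`, the Chernoff integral is
minimized at `s = 0` with value `F(τ − Δ)`; hence the diversity gains of the ML and
LA detectors coincide: `D_LA = D_ML = −log F(τ − Δ)`. -/
theorem chernoff_min_at_zero_mode_at_tau
    (Δ τ : ℝ) (hΔ : 0 < Δ) (hΔτ : Δ < τ)
    (f : ℝ → ℝ)
    (hf_nonneg : ∀ z, 0 ≤ f z)
    (hf_meas : Measurable f)
    (hf_int : ∫ z, f z = 1)
    (hf_zero_left : ∀ z ≤ (0 : ℝ), f z = 0)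
    (hf_zero_right : ∀ z : ℝ, τ < z → f z = 0)
    (hf_mono : MonotoneOn f (Ioc 0 τ))
    (hF_pos : 0 < ∫ t in (0 : ℝ)..(τ - Δ), f t) :
    IsLeast {x : ℝ | ∃ s ∈ Icc (0 : ℝ) 1,
        x = ∫ y in Ioc Δ τ, f y ^ s * f (y - Δ) ^ (1 - s)}
      (∫ t in (0 : ℝ)..(τ - Δ), f t) ∧
    (∫ y in Ioc Δ τ, f y ^ (0 : ℝ) * f (y - Δ) ^ (1 - (0 : ℝ)))
      = ∫ t in (0 : ℝ)..(τ - Δ), f t ∧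
    (-sInf {x : ℝ | ∃ s ∈ Icc (0 : ℝ) 1,
        x = Real.log (∫ y in Ioc Δ τ, f y ^ s * f (y - Δ) ^ (1 - s))})
      = -Real.log (∫ t in (0 : ℝ)..(τ - Δ), f t) := by
  have hfi : Integrable f := integrable_of_integral_eq_one hf_int
  have hle : ∀ y ∈ Ioc Δ τ, f (y - Δ) ≤ f y := by
    intro y hy
    exact hf_mono ⟨by linarith [hy.1], by linarith [hy.2, hΔ]⟩
      ⟨lt_trans hΔ hy.1, hy.2⟩ (by linarith [hΔ])
  -- translation identity
  have hT : (∫ y in Ioc Δ τ, f (y - Δ)) = ∫ t in (0 : ℝ)..(τ - Δ), f t := by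
    rw [← intervalIntegral.integral_of_le hΔτ.le,
      intervalIntegral.integral_comp_sub_right f Δ, sub_self]
  -- integrability of the Chernoff integrand for s ∈ [0,1]
  have hgi : ∀ s ∈ Icc (0:ℝ) 1,
      IntegrableOn (fun y => f y ^ s * f (y - Δ) ^ (1 - s)) (Ioc Δ τ) := by
    intro s hs
    have hm1 : Measurable (fun y : ℝ => f (y - Δ)) :=
      hf_meas.comp (measurable_id.sub_const Δ)
    have hmeas : Measurable (fun y => f y ^ s * f (y - Δ) ^ (1 - s)) := by
      measurability
    refine Integrable.mono' hfi.integrableOn hmeas.aestronglyMeasurable ?_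
    refine (ae_restrict_iff' measurableSet_Ioc).2 (ae_of_all _ ?_)
    intro y hy
    obtain ⟨h0, h2⟩ := chernoff_pointwise (f (y - Δ)) (f y) s
      (hf_nonneg _) (hle y hy) hs.1 hs.2
    rw [Real.norm_eq_abs, abs_of_nonneg (le_trans (hf_nonneg _) h0)]
    exact h2
  have hsub : Integrable (fun y => f (y - Δ)) := hfi.comp_sub_right Δ
  -- lower bound
  have hLB : ∀ s ∈ Icc (0:ℝ) 1,
      (∫ t in (0 : ℝ)..(τ - Δ), f t)
        ≤ ∫ y in Ioc Δ τ, f y ^ s * f (y - Δ) ^ (1 - s) := by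
    intro s hs
    rw [← hT]
    refine setIntegral_mono_on hsub.integrableOn (hgi s hs) measurableSet_Ioc ?_
    intro y hy
    exact (chernoff_pointwise (f (y - Δ)) (f y) s
      (hf_nonneg _) (hle y hy) hs.1 hs.2).1
  -- value at s = 0
  have hEq0 : (∫ y in Ioc Δ τ, f y ^ (0:ℝ) * f (y - Δ) ^ (1 - (0:ℝ)))
      = ∫ t in (0 : ℝ)..(τ - Δ), f t := by
    rw [← hT]
    simp [Real.rpow_one]
  have hmem : (∫ t in (0 : ℝ)..(τ - Δ), f t) ∈ {x : ℝ | ∃ s ∈ Icc (0 : ℝ) 1,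
      x = ∫ y in Ioc Δ τ, f y ^ s * f (y - Δ) ^ (1 - s)} :=
    ⟨0, ⟨le_refl 0, zero_le_one⟩, hEq0.symm⟩
  refine ⟨⟨hmem, ?_⟩, hEq0, ?_⟩
  · rintro x ⟨s, hs, rfl⟩
    exact hLB s hs
  · congr 1
    have hlog : IsLeast {x : ℝ | ∃ s ∈ Icc (0 : ℝ) 1,
        x = Real.log (∫ y in Ioc Δ τ, f y ^ s * f (y - Δ) ^ (1 - s))}
        (Real.log (∫ t in (0 : ℝ)..(τ - Δ), f t)) := by
      constructor
      · exact ⟨0, ⟨le_refl 0, zero_le_one⟩, by rw [hEq0]⟩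
      · rintro x ⟨s, hs, rfl⟩
        exact Real.log_le_log hF_pos (hLB s hs)
    exact hlog.csInf_eq
end

section
/- Let b > 0 and Δ > 0, and let f(z) = b·exp(−b·z) for z ≥ 0 (the exponential density with rate b). Then for every s ∈ [0,1], ∫_Δ^∞ f(y)^s · f(y − Δ)^{1−s} dy = exp(−b·Δ·s), and consequently −min_{s ∈ [0,1]} log ∫_Δ^∞ f(y)^s f(y−Δ)^{1−s} dy = b·Δ. Hence the diversity gain of the ML detector for exponential propagation delays equals b·Δ. -/
open MeasureTheory Set

/-! For `y > Δ` both densities are on their exponential branch, so the integrand is the geometric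
mean `b · exp(bΔ(1 - s)) · exp(-b y)`, whose integral over `(Δ, ∞)` is `exp(-bΔs)`. Its logarithm
`-bΔs` is antitone in `s`, so the minimum over `[0, 1]` is attained at `s = 1`. -/

lemma mul_exp_rpow_mul_mul_exp_rpow_one_sub {a : ℝ} (ha : 0 ≤ a) (u v s : ℝ) :
    (a * Real.exp u) ^ s * (a * Real.exp v) ^ (1 - s) = a * Real.exp (s * u + (1 - s) * v) := by
  rw [Real.mul_rpow ha (Real.exp_nonneg _), Real.mul_rpow ha (Real.exp_nonneg _),
    ← Real.exp_mul, ← Real.exp_mul, mul_mul_mul_comm, ← Real.rpow_add' ha (by norm_num),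
    add_sub_cancel, Real.rpow_one, ← Real.exp_add, mul_comm u, mul_comm v]

lemma chernoff_integral_exponential {b Δ : ℝ} (hb : 0 < b) (hΔ : 0 ≤ Δ) {f : ℝ → ℝ}
    (hf : ∀ z : ℝ, 0 ≤ z → f z = b * Real.exp (-b * z)) (s : ℝ) :
    ∫ y in Ioi Δ, f y ^ s * f (y - Δ) ^ (1 - s) = Real.exp (-b * Δ * s) := by
  have hintegrand : ∀ y ∈ Ioi Δ, f y ^ s * f (y - Δ) ^ (1 - s)
      = b * Real.exp (b * Δ * (1 - s)) * Real.exp (-b * y) := by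
    intro y hy
    have hy : Δ < y := hy
    rw [hf y (by linarith), hf (y - Δ) (by linarith),
      mul_exp_rpow_mul_mul_exp_rpow_one_sub hb.le, mul_assoc, ← Real.exp_add]
    ring_nf
  rw [setIntegral_congr_fun measurableSet_Ioi hintegrand, integral_const_mul,
    integral_exp_mul_Ioi (neg_lt_zero.mpr hb), neg_div_neg_eq, mul_right_comm,
    mul_div_cancel₀ _ hb.ne', ← Real.exp_add]
  ring_nf

theorem ml_diversity_gain_exponential_general
    (b Δ : ℝ) (hb : 0 < b) (hΔ : 0 < Δ)
    (f : ℝ → ℝ)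
    (hf : ∀ z : ℝ, 0 ≤ z → f z = b * Real.exp (-b * z)) :
    (∀ s ∈ Icc (0 : ℝ) 1,
      (∫ y in Ioi Δ, f y ^ s * f (y - Δ) ^ (1 - s)) = Real.exp (-b * Δ * s)) ∧
    (-sInf {x : ℝ | ∃ s ∈ Icc (0 : ℝ) 1,
        x = Real.log (∫ y in Ioi Δ, f y ^ s * f (y - Δ) ^ (1 - s))})
      = b * Δ := by
  have hchernoff := chernoff_integral_exponential hb hΔ.le hf
  refine ⟨fun s _ => hchernoff s, ?_⟩
  have hset : {x : ℝ | ∃ s ∈ Icc (0 : ℝ) 1,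
      x = Real.log (∫ y in Ioi Δ, f y ^ s * f (y - Δ) ^ (1 - s))}
      = (fun s => -b * Δ * s) '' Icc 0 1 := by
    ext x
    simp only [hchernoff, Real.log_exp, mem_ofPred_eq, mem_image, eq_comm]
  have hanti : AntitoneOn (fun s : ℝ => -b * Δ * s) (Icc 0 1) := fun s _ t _ hst =>
    mul_le_mul_of_nonpos_left hst (by nlinarith)
  rw [hset, hanti.sInf_image_Icc zero_le_one]
  ring

/-- For exponential propagation delays with rate `b`, the Chernoff integral equals
`exp(−bΔs)` for every `s ∈ [0,1]`, and hence the diversity gain of the ML detector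
equals `b·Δ`. -/
theorem ml_diversity_gain_exponential
    (b Δ : ℝ) (hb : 0 < b) (hΔ : 0 < Δ)
    (f : ℝ → ℝ)
    (hf : ∀ z : ℝ, 0 ≤ z → f z = b * Real.exp (-b * z))
    (hf_zero : ∀ z < (0 : ℝ), f z = 0) :
    (∀ s ∈ Icc (0 : ℝ) 1,
      (∫ y in Ioi Δ, f y ^ s * f (y - Δ) ^ (1 - s)) = Real.exp (-b * Δ * s)) ∧
    (-sInf {x : ℝ | ∃ s ∈ Icc (0 : ℝ) 1,
        x = Real.log (∫ y in Ioi Δ, f y ^ s * f (y - Δ) ^ (1 - s))})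
      = b * Δ :=
  ml_diversity_gain_exponential_general b Δ hb hΔ f hf
end

section
/- Let b > 0 and Δ > 0, and define Λ*(v) = b·v − 1 − log(b·v) for v > 0 (the Cramér rate function of the exponential(b) distribution) and α = (1 − exp(b·Δ)·(1 − b·Δ)) / ((exp(b·Δ) − 1)·b). Then 1/b − Δ + α = Δ/(exp(b·Δ) − 1) > 0, and Λ*(1/b + α) = Λ*(1/b − Δ + α). That is, α is the offset at which the right-tail and left-tail rate functions of the linear detector's threshold balance for exponential noise with mean μ = 1/b. -/
/-- For exponential noise with rate `b` (mean `μ = 1/b`), the offset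
`α = (1 − e^{bΔ}(1 − bΔ)) / ((e^{bΔ} − 1)b)` balances the two tails of the Cramér rate
function `Λ*(v) = bv − 1 − log(bv)`: `1/b − Δ + α = Δ/(e^{bΔ} − 1) > 0` and
`Λ*(1/b + α) = Λ*(1/b − Δ + α)`. -/
theorem exponential_linear_detector_balance
    (b Δ : ℝ) (hb : 0 < b) (hΔ : 0 < Δ)
    (α : ℝ)
    (hα : α = (1 - Real.exp (b * Δ) * (1 - b * Δ)) / ((Real.exp (b * Δ) - 1) * b)) :
    1 / b - Δ + α = Δ / (Real.exp (b * Δ) - 1) ∧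
    0 < Δ / (Real.exp (b * Δ) - 1) ∧
    (b * (1 / b + α) - 1 - Real.log (b * (1 / b + α)))
      = (b * (1 / b - Δ + α) - 1 - Real.log (b * (1 / b - Δ + α))) := by
  have hE : 1 < Real.exp (b * Δ) := by
    have := Real.add_one_lt_exp (x := b * Δ) (by positivity)
    linarith [mul_pos hb hΔ]
  have hE0 : (0:ℝ) < Real.exp (b * Δ) - 1 := by linarith
  have hx : b * (1 / b - Δ + α) = b * Δ / (Real.exp (b * Δ) - 1) := by
    rw [hα]; field_simp; ring
  have hy : b * (1 / b + α) = Real.exp (b * Δ) * (b * Δ / (Real.exp (b * Δ) - 1)) := by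
    rw [hα]; field_simp; ring
  have hpos : 0 < b * Δ / (Real.exp (b * Δ) - 1) := by positivity
  refine ⟨?_, by positivity, ?_⟩
  · rw [hα]; field_simp; ring
  · rw [hx, hy, Real.log_mul (Real.exp_pos _).ne' hpos.ne', Real.log_exp]
    field_simp
    ring
end

section
/- Let b > 0 and Δ > 0, define Λ*(v) = b·v − 1 − log(b·v) for v > 0 and α = (1 − exp(b·Δ)·(1 − b·Δ)) / ((exp(b·Δ) − 1)·b). Then Λ*(1/b + α) = ( 1 + exp(b·Δ)·(b·Δ − 1) − (exp(b·Δ) − 1)·log( b·Δ·exp(b·Δ)/(exp(b·Δ) − 1) ) ) / ( exp(b·Δ) − 1 ). That is, the diversity gain of the linear detector for exponential(b) propagation delays equals this closed-form expression. -/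
/-- Closed form of the diversity gain of the linear detector for exponential(b)
propagation delays: `Λ*(1/b + α)` equals
`(1 + e^{bΔ}(bΔ − 1) − (e^{bΔ} − 1)·log(bΔe^{bΔ}/(e^{bΔ} − 1))) / (e^{bΔ} − 1)`. -/
theorem exponential_linear_detector_diversity_gain
    (b Δ : ℝ) (hb : 0 < b) (hΔ : 0 < Δ)
    (α : ℝ)
    (hα : α = (1 - Real.exp (b * Δ) * (1 - b * Δ)) / ((Real.exp (b * Δ) - 1) * b)) :
    b * (1 / b + α) - 1 - Real.log (b * (1 / b + α))
      = (1 + Real.exp (b * Δ) * (b * Δ - 1)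
          - (Real.exp (b * Δ) - 1) *
            Real.log (b * Δ * Real.exp (b * Δ) / (Real.exp (b * Δ) - 1)))
        / (Real.exp (b * Δ) - 1) := by
  have hE : 1 < Real.exp (b * Δ) := by have := Real.add_one_lt_exp (x := b * Δ) (by positivity); nlinarith [mul_pos hb hΔ]
  have hE1 : Real.exp (b * Δ) - 1 ≠ 0 := by linarith
  have key : b * (1 / b + α) = b * Δ * Real.exp (b * Δ) / (Real.exp (b * Δ) - 1) := by
    rw [hα]; field_simp; ring
  rw [key]
  field_simp
  ring
end

section
/- Let μ > 0, b > 0, and v > 0, and define Λ(λ) = (b/μ)·(1 − √(1 − 2·μ²·λ/b)) for λ ≤ b/(2μ²) (the cumulant generating function of the inverse Gaussian distribution IG(μ, b)). Then the set { λ·v − Λ(λ) : λ ∈ ℝ, λ ≤ b/(2μ²) } has greatest element b·(v − μ)² / (2·μ²·v), attained at λ = b·(1 − μ²/v²)/(2μ²). That is, the Cramér rate function of IG(μ, b) is Λ*(v) = b·(v − μ)²/(2·μ²·v) = b·(−μ² + 2μ(μ/v − 1)v + v²)/(2μ²v) for v > 0. -/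
/-- Cramér rate function of the inverse Gaussian distribution `IG(μ, b)`:
with `Λ(λ) = (b/μ)(1 − √(1 − 2μ²λ/b))` for `λ ≤ b/(2μ²)`, the supremum of
`λv − Λ(λ)` equals `b(v − μ)²/(2μ²v)`, attained at `λ = b(1 − μ²/v²)/(2μ²)`. -/
theorem inverse_gaussian_rate_function
    (μ b v : ℝ) (hμ : 0 < μ) (hb : 0 < b) (hv : 0 < v) :
    IsGreatest {x : ℝ | ∃ l : ℝ, l ≤ b / (2 * μ ^ 2) ∧
        x = l * v - (b / μ) * (1 - Real.sqrt (1 - 2 * μ ^ 2 * l / b))}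
      (b * (v - μ) ^ 2 / (2 * μ ^ 2 * v)) ∧
    ((b * (1 - μ ^ 2 / v ^ 2) / (2 * μ ^ 2)) * v
        - (b / μ) * (1 - Real.sqrt (1 - 2 * μ ^ 2 * (b * (1 - μ ^ 2 / v ^ 2) / (2 * μ ^ 2)) / b)))
      = b * (v - μ) ^ 2 / (2 * μ ^ 2 * v) ∧
    b * (v - μ) ^ 2 / (2 * μ ^ 2 * v)
      = b * (-μ ^ 2 + 2 * μ * (μ / v - 1) * v + v ^ 2) / (2 * μ ^ 2 * v) := by
  have hμ2 : (0:ℝ) < μ ^ 2 := by positivity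
  have harg : 1 - 2 * μ ^ 2 * (b * (1 - μ ^ 2 / v ^ 2) / (2 * μ ^ 2)) / b = (μ / v) ^ 2 := by
    field_simp
    ring
  have key : (b * (1 - μ ^ 2 / v ^ 2) / (2 * μ ^ 2)) * v
        - (b / μ) * (1 - Real.sqrt (1 - 2 * μ ^ 2 * (b * (1 - μ ^ 2 / v ^ 2) / (2 * μ ^ 2)) / b))
      = b * (v - μ) ^ 2 / (2 * μ ^ 2 * v) := by
    rw [harg, Real.sqrt_sq (by positivity)]
    field_simp
    ring
  refine ⟨⟨⟨b * (1 - μ ^ 2 / v ^ 2) / (2 * μ ^ 2), ?_, key.symm⟩, ?_⟩, key, ?_⟩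
  · rw [div_le_div_iff₀ (by positivity) (by positivity)]
    have h0 : (0:ℝ) ≤ μ ^ 2 / v ^ 2 := by positivity
    nlinarith [mul_nonneg (mul_nonneg hb.le h0) (by positivity : (0:ℝ) ≤ 2 * μ ^ 2)]
  · rintro x ⟨l, hl, rfl⟩
    set s := Real.sqrt (1 - 2 * μ ^ 2 * l / b) with hsdef
    have hs0 : 0 ≤ s := Real.sqrt_nonneg _
    have harg0 : 0 ≤ 1 - 2 * μ ^ 2 * l / b := by
      rw [sub_nonneg, div_le_one hb]
      rw [le_div_iff₀ (by positivity)] at hl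
      linarith
    have hs2 : s ^ 2 = 1 - 2 * μ ^ 2 * l / b := Real.sq_sqrt harg0
    have hkey : 2 * μ ^ 2 * l = b * (1 - s ^ 2) := by
      field_simp at hs2
      linarith
    have ht : (b / μ) * μ = b := div_mul_cancel₀ b (ne_of_gt hμ)
    rw [le_div_iff₀ (by positivity : (0:ℝ) < 2 * μ ^ 2 * v)]
    have h2 : b / μ * (1 - s) * (2 * μ ^ 2 * v) = 2 * b * μ * v * (1 - s) := by
      field_simp
    have hkv : 2 * μ ^ 2 * l * v ^ 2 = b * (1 - s ^ 2) * v ^ 2 := by rw [hkey]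
    nlinarith [h2, hkv, mul_nonneg hb.le (sq_nonneg (s * v - μ))]
  · have h3 : 2 * μ * (μ / v - 1) * v = 2 * μ ^ 2 - 2 * μ * v := by
      field_simp
    rw [h3]
    ring
end

section
/- Let c > 0 and let f : ℝ → ℝ be given on (0, ∞) by the Lévy density f(z) = √(c/(2π)) · z^{−3/2} · exp(−c/(2z)). Then the function g(z) = f′(z)/f(z)² satisfies g(z) = √(π/(2·c·z)) · exp(c/(2z)) · (c − 3z) for all z > 0, its derivative is g′(z) = −√(π/(8·c·z⁵)) · exp(c/(2z)) · (c² − 2cz + 3z²), and g′(z) < 0 for every z > 0; in particular g is strictly decreasing on (0, ∞). -/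
open Set

/-!
Logarithmic differentiation gives `f' = f · (c − 3z)/(2z²)`, so `g = (c − 3z)/(2z² f)`, and the
normalising constant of `f` combines with `z^{−3/2}` into `√(π/(2cz))`. Differentiating this closed
form once more, `g'` is a negative multiple of `c² − 2cz + 3z² = (c − z)² + 2z² > 0`.
-/

open Real

lemma hasDerivAt_exp_div (a : ℝ) {z : ℝ} (hz : z ≠ 0) :
    HasDerivAt (fun w => exp (a / w)) (-(a / z ^ 2) * exp (a / z)) z := by
  have h := ((hasDerivAt_inv hz).const_mul a).exp
  simp only [← div_eq_mul_inv] at h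
  convert h using 1
  ring

lemma hasDerivAt_rpow_mul_exp_div (p a : ℝ) {z : ℝ} (hz : z ≠ 0) :
    HasDerivAt (fun w => w ^ p * exp (a / w))
      (z ^ p * exp (a / z) * (p / z - a / z ^ 2)) z := by
  refine ((hasDerivAt_rpow_const (p := p) (Or.inl hz)).mul (hasDerivAt_exp_div a hz)).congr_deriv ?_
  rw [rpow_sub_one hz]
  ring

lemma hasDerivAt_sqrt_div {a z : ℝ} (ha : 0 < a) (hz : 0 < z) :
    HasDerivAt (fun w => √(a / w)) (-√(a / z) / (2 * z)) z := by
  have h := ((hasDerivAt_inv hz.ne').const_mul a).sqrt (by positivity)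
  simp only [← div_eq_mul_inv] at h
  have hsq : √(a / z) ^ 2 = a / z := sq_sqrt (by positivity)
  have hpos : 0 < √(a / z) := sqrt_pos.2 (by positivity)
  convert h using 1
  field_simp
  rw [hsq]
  field_simp

lemma rpow_neg_three_halves {z : ℝ} (hz : 0 < z) : z ^ (-(3 : ℝ) / 2) = √z / z ^ 2 := by
  rw [show -(3 : ℝ) / 2 = 1 / 2 - (2 : ℕ) by norm_num, rpow_sub hz, rpow_natCast,
    ← sqrt_eq_rpow]

noncomputable def levyDensity (c z : ℝ) : ℝ :=
  √(c / (2 * π)) * z ^ (-(3 : ℝ) / 2) * exp (-c / (2 * z))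

lemma levyDensity_pos {c z : ℝ} (hc : 0 < c) (hz : 0 < z) : 0 < levyDensity c z := by
  unfold levyDensity
  have := sqrt_pos.2 (show 0 < c / (2 * π) by positivity)
  positivity

lemma hasDerivAt_levyDensity (c : ℝ) {z : ℝ} (hz : z ≠ 0) :
    HasDerivAt (levyDensity c) (levyDensity c z * (c - 3 * z) / (2 * z ^ 2)) z := by
  have h := (hasDerivAt_rpow_mul_exp_div (-(3 : ℝ) / 2) (-c / 2) hz).const_mul √(c / (2 * π))
  simp only [div_div, ← mul_assoc] at h
  refine h.congr_deriv ?_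
  unfold levyDensity
  field_simp
  ring

lemma two_mul_sq_mul_levyDensity_mul {c z : ℝ} (hc : 0 < c) (hz : 0 < z) :
    2 * z ^ 2 * levyDensity c z * (√(π / (2 * c * z)) * exp (c / (2 * z))) = 1 := by
  have hexp : exp (-c / (2 * z)) * exp (c / (2 * z)) = 1 := by
    rw [← exp_add, neg_div, neg_add_cancel, exp_zero]
  have hsqrt : √(c / (2 * π)) * √z * √(π / (2 * c * z)) = 1 / 2 := by
    rw [← sqrt_mul (by positivity), ← sqrt_mul (by positivity),
      show c / (2 * π) * z * (π / (2 * c * z)) = (1 / 2) ^ 2 by field_simp,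
      sqrt_sq (by norm_num)]
  unfold levyDensity
  rw [rpow_neg_three_halves hz]
  calc _ = 2 * (√(c / (2 * π)) * √z * √(π / (2 * c * z)))
          * (exp (-c / (2 * z)) * exp (c / (2 * z))) := by field_simp
    _ = 1 := by rw [hsqrt, hexp]; norm_num

/-- The paper's `g = f' / f²` for the Lévy density `f`, in closed form. -/
noncomputable def levyDerivDivSq (c z : ℝ) : ℝ :=
  √(π / (2 * c * z)) * exp (c / (2 * z)) * (c - 3 * z)

lemma deriv_levyDensity_div_sq {c z : ℝ} (hc : 0 < c) (hz : 0 < z) :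
    deriv (levyDensity c) z / levyDensity c z ^ 2 = levyDerivDivSq c z := by
  have hL := two_mul_sq_mul_levyDensity_mul hc hz
  have hpos := levyDensity_pos hc hz
  rw [(hasDerivAt_levyDensity c hz.ne').deriv, levyDerivDivSq]
  generalize √(π / (2 * c * z)) * exp (c / (2 * z)) = k at hL ⊢
  field_simp
  linear_combination (3 * z - c) * hL

lemma sqrt_div_eight_mul_pow_five {c z : ℝ} (hz : 0 < z) :
    √(π / (8 * c * z ^ 5)) = √(π / (2 * c * z)) / (2 * z ^ 2) := by
  rw [show π / (8 * c * z ^ 5) = π / (2 * c * z) / (2 * z ^ 2) ^ 2 by field_simp; ring,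
    sqrt_div' _ (by positivity), sqrt_sq (by positivity)]

lemma hasDerivAt_levyDerivDivSq {c z : ℝ} (hc : 0 < c) (hz : 0 < z) :
    HasDerivAt (levyDerivDivSq c)
      (-√(π / (8 * c * z ^ 5)) * exp (c / (2 * z)) * (c ^ 2 - 2 * c * z + 3 * z ^ 2)) z := by
  have hu := hasDerivAt_sqrt_div (a := π / (2 * c)) (by positivity) hz
  have hE := hasDerivAt_exp_div (c / 2) hz.ne'
  have hl := (hasDerivAt_id z).const_mul 3 |>.const_sub c
  have h := (hu.mul hE).mul hl
  simp only [div_div] at h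
  refine h.congr_deriv ?_
  simp only [Pi.mul_apply, id]
  rw [sqrt_div_eight_mul_pow_five hz]
  field_simp
  ring

lemma deriv_levyDerivDivSq_neg {c z : ℝ} (hc : 0 < c) (hz : 0 < z) :
    deriv (levyDerivDivSq c) z < 0 := by
  rw [(hasDerivAt_levyDerivDivSq hc hz).deriv]
  have := sqrt_pos.2 (show 0 < π / (8 * c * z ^ 5) by positivity)
  have : 0 < c ^ 2 - 2 * c * z + 3 * z ^ 2 := by nlinarith [sq_nonneg (c - z)]
  rw [neg_mul, neg_mul, neg_lt_zero]
  positivity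

lemma strictAntiOn_levyDerivDivSq {c : ℝ} (hc : 0 < c) :
    StrictAntiOn (levyDerivDivSq c) (Ioi 0) := by
  refine strictAntiOn_of_deriv_neg (convex_Ioi 0)
    (fun z hz => (hasDerivAt_levyDerivDivSq hc hz).continuousAt.continuousWithinAt)
    fun z hz => ?_
  rw [interior_Ioi] at hz
  exact deriv_levyDerivDivSq_neg hc hz

/-- For the Lévy density `f(z) = √(c/(2π))·z^{−3/2}·e^{−c/(2z)}` on `(0,∞)`, the
function `g = f'/f²` has the closed form `g(z) = √(π/(2cz))·e^{c/(2z)}·(c − 3z)`, its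
derivative is `g'(z) = −√(π/(8cz⁵))·e^{c/(2z)}·(c² − 2cz + 3z²) < 0`, and `g` is
strictly decreasing on `(0, ∞)`. -/
theorem levy_g_strict_anti
    (c : ℝ) (hc : 0 < c)
    (f : ℝ → ℝ)
    (hf : ∀ z ∈ Ioi (0 : ℝ),
      f z = Real.sqrt (c / (2 * Real.pi)) * z ^ (-(3 : ℝ) / 2) * Real.exp (-c / (2 * z))) :
    (∀ z ∈ Ioi (0 : ℝ),
      deriv f z / (f z) ^ 2
        = Real.sqrt (Real.pi / (2 * c * z)) * Real.exp (c / (2 * z)) * (c - 3 * z) ∧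
      deriv (fun w => deriv f w / (f w) ^ 2) z
        = -Real.sqrt (Real.pi / (8 * c * z ^ 5)) * Real.exp (c / (2 * z)) *
            (c ^ 2 - 2 * c * z + 3 * z ^ 2) ∧
      deriv (fun w => deriv f w / (f w) ^ 2) z < 0) ∧
    StrictAntiOn (fun z => deriv f z / (f z) ^ 2) (Ioi 0) := by
  have hf_nhds : ∀ z ∈ Ioi (0 : ℝ), f =ᶠ[nhds z] levyDensity c := fun z hz =>
    Filter.eventually_of_mem (isOpen_Ioi.mem_nhds hz) hf
  have hg : EqOn (fun z => deriv f z / f z ^ 2) (levyDerivDivSq c) (Ioi 0) := fun z hz => by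
    simp only
    rw [(hf_nhds z hz).deriv_eq, hf z hz, ← deriv_levyDensity_div_sq hc hz, levyDensity]
  have hg' : ∀ z ∈ Ioi (0 : ℝ), deriv (fun w => deriv f w / f w ^ 2) z
      = -√(π / (8 * c * z ^ 5)) * exp (c / (2 * z)) * (c ^ 2 - 2 * c * z + 3 * z ^ 2) :=
    fun z hz => ((hasDerivAt_levyDerivDivSq hc hz).congr_of_eventuallyEq
      (Filter.eventually_of_mem (isOpen_Ioi.mem_nhds hz) hg)).deriv
  refine ⟨fun z hz => ⟨hg hz, hg' z hz, ?_⟩, (strictAntiOn_levyDerivDivSq hc).congr hg.symm⟩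
  rw [hg' z hz, ← (hasDerivAt_levyDerivDivSq hc hz).deriv]
  exact deriv_levyDerivDivSq_neg hc hz
end

section
/- Let μ > 0, b > 0, and let f : ℝ → ℝ be given on (0, ∞) by the inverse Gaussian density f(z) = √(b/(2π·z³)) · exp(−b·(z − μ)²/(2·μ²·z)). Then the function g(z) = f′(z)/f(z)² satisfies g(z) = √(π/(2·μ⁴·b·z)) · exp( b(z − μ)²/(2μ²z) ) · ( b(μ² − z²) − 3μ²z ) for all z > 0, its derivative is g′(z) = −√(π/(8·μ⁸·b·z⁵)) · exp( b(z−μ)²/(2μ²z) ) · ( 3μ⁴z² + b²(μ² − z²)² + b(6μ²z³ − 2μ⁴z) ), and g′(z) < 0 for every z > 0; in particular g is strictly decreasing on (0, ∞). -/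
/-! Write `L = f'/f` for the logarithmic derivative of the density, so that `g = f'/f² = L/f`.
Whenever `L' = L² + M`, differentiating the quotient gives `g' = M/f`, hence `g'` has the sign
of `M`. For the inverse Gaussian, `L(z) = (b(μ² − z²) − 3μ²z)/(2μ²z²)` is rational and
`M = −P/(4μ⁴z⁴)` with `P` the quartic of the statement. Viewed as a quadratic in `b`, `P` has
nonnegative coefficients when `μ² ≤ 3z²`, and negative discriminant `8μ⁴z²(3z⁴ − μ⁴)`
otherwise, so `P > 0`. -/

open Set Real

theorem HasDerivAt.div_of_hasDerivAt_eq_mul {𝕜 : Type*} [NontriviallyNormedField 𝕜]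
    {f L : 𝕜 → 𝕜} {z M : 𝕜} (hL : HasDerivAt L (L z ^ 2 + M) z)
    (hf : HasDerivAt f (f z * L z) z) (hfz : f z ≠ 0) :
    HasDerivAt (fun w => L w / f w) (M / f z) z :=
  (hL.div hf hfz).congr_deriv (by field_simp; ring)

namespace InverseGaussian

noncomputable def density (μ b z : ℝ) : ℝ :=
  √(b / (2 * π * z ^ 3)) * exp (-b * (z - μ) ^ 2 / (2 * μ ^ 2 * z))

noncomputable def logDensityDeriv (μ b z : ℝ) : ℝ :=
  (b * (μ ^ 2 - z ^ 2) - 3 * μ ^ 2 * z) / (2 * μ ^ 2 * z ^ 2)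

variable {μ b z : ℝ}

theorem density_pos (hb : 0 < b) (hz : 0 < z) : 0 < density μ b z := by
  unfold density; positivity

theorem inv_density :
    (density μ b z)⁻¹ =
      √(2 * π * z ^ 3 / b) * exp (b * (z - μ) ^ 2 / (2 * μ ^ 2 * z)) := by
  rw [density, mul_inv, ← sqrt_inv, inv_div, ← exp_neg]
  congr 2
  ring

theorem hasDerivAt_sqrt_div_pow_three (hb : 0 < b) (hz : 0 < z) :
    HasDerivAt (fun w => √(b / (2 * π * w ^ 3)))
      (√(b / (2 * π * z ^ 3)) * (-3 / (2 * z))) z := by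
  have hpos : 0 < b / (2 * π * z ^ 3) := by positivity
  have h : HasDerivAt (fun w => b / (2 * π * w ^ 3)) (b / (2 * π * z ^ 3) * (-3 / z)) z :=
    ((hasDerivAt_const z b).div ((hasDerivAt_pow 3 z).const_mul (2 * π))
      (by positivity)).congr_deriv (by field_simp; ring)
  refine (h.sqrt hpos.ne').congr_deriv ?_
  nth_rewrite 1 [← sq_sqrt hpos.le]
  have hs0 : √(b / (2 * π * z ^ 3)) ≠ 0 := (sqrt_pos.2 hpos).ne'
  field_simp

theorem hasDerivAt_exponent (hμ : μ ≠ 0) (hz : z ≠ 0) :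
    HasDerivAt (fun w => -b * (w - μ) ^ 2 / (2 * μ ^ 2 * w))
      (b * (μ ^ 2 - z ^ 2) / (2 * μ ^ 2 * z ^ 2)) z :=
  ((((hasDerivAt_id z).sub_const μ).pow 2).const_mul (-b) |>.div
    ((hasDerivAt_id z).const_mul (2 * μ ^ 2)) (by simp [hμ, hz])).congr_deriv
    (by simp only [id, Pi.pow_apply]; field_simp; ring)

theorem hasDerivAt_density (hμ : μ ≠ 0) (hb : 0 < b) (hz : 0 < z) :
    HasDerivAt (density μ b) (density μ b z * logDensityDeriv μ b z) z :=
  ((hasDerivAt_sqrt_div_pow_three hb hz).mul (hasDerivAt_exponent hμ hz.ne').exp).congr_deriv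
    (by rw [density, logDensityDeriv]; field_simp; ring)

def quartic (μ b z : ℝ) : ℝ :=
  3 * μ ^ 4 * z ^ 2 + b ^ 2 * (μ ^ 2 - z ^ 2) ^ 2 + b * (6 * μ ^ 2 * z ^ 3 - 2 * μ ^ 4 * z)

theorem hasDerivAt_logDensityDeriv (hμ : μ ≠ 0) (hz : z ≠ 0) :
    HasDerivAt (logDensityDeriv μ b)
      (logDensityDeriv μ b z ^ 2 + -quartic μ b z / (4 * μ ^ 4 * z ^ 4)) z := by
  have hQ : HasDerivAt (fun w => b * (μ ^ 2 - w ^ 2) - 3 * μ ^ 2 * w)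
      (-2 * b * z - 3 * μ ^ 2) z :=
    (((hasDerivAt_pow 2 z).const_sub (μ ^ 2)).const_mul b |>.sub
      ((hasDerivAt_id z).const_mul (3 * μ ^ 2))).congr_deriv (by simp; ring)
  refine (hQ.div ((hasDerivAt_pow 2 z).const_mul (2 * μ ^ 2)) (by simp [hμ, hz])).congr_deriv ?_
  rw [logDensityDeriv, quartic]
  field_simp
  ring

theorem quartic_pos (hμ : 0 < μ) (hb : 0 < b) (hz : 0 < z) : 0 < quartic μ b z := by
  rcases le_or_gt (μ ^ 2) (3 * z ^ 2) with h | h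
  · have hmix : 0 ≤ b * (2 * μ ^ 2 * z * (3 * z ^ 2 - μ ^ 2)) := by
      have := sub_nonneg.2 h; positivity
    rw [quartic]
    nlinarith [sq_nonneg (b * (μ ^ 2 - z ^ 2)), pow_pos hμ 4, pow_pos hz 2]
  · have hlead : 0 < (μ ^ 2 - z ^ 2) ^ 2 := by
      have : z ^ 2 < μ ^ 2 := by nlinarith
      nlinarith
    have hdisc : 0 < 2 * μ ^ 4 * z ^ 2 * (μ ^ 4 - 3 * z ^ 4) := by
      have : 3 * z ^ 4 < μ ^ 4 := by nlinarith [pow_pos hz 2]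
      have := sub_pos.2 this; positivity
    have key : (μ ^ 2 - z ^ 2) ^ 2 * quartic μ b z =
        ((μ ^ 2 - z ^ 2) ^ 2 * b + μ ^ 2 * z * (3 * z ^ 2 - μ ^ 2)) ^ 2 +
          2 * μ ^ 4 * z ^ 2 * (μ ^ 4 - 3 * z ^ 4) := by
      rw [quartic]; ring
    exact pos_of_mul_pos_right (key ▸ by positivity) hlead.le

theorem div_div_density {c : ℝ} (hc : 0 < c) (R : ℝ) :
    R / c / density μ b z = √(2 * π * z ^ 3 / b / c ^ 2) *
      exp (b * (z - μ) ^ 2 / (2 * μ ^ 2 * z)) * R := by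
  rw [div_eq_mul_inv _ (density μ b z), inv_density, sqrt_div' _ (sq_nonneg c), sqrt_sq hc.le]
  ring

theorem logDensityDeriv_div_density (hμ : μ ≠ 0) (hb : b ≠ 0) (hz : z ≠ 0) :
    logDensityDeriv μ b z / density μ b z = √(π / (2 * μ ^ 4 * b * z)) *
      exp (b * (z - μ) ^ 2 / (2 * μ ^ 2 * z)) * (b * (μ ^ 2 - z ^ 2) - 3 * μ ^ 2 * z) := by
  rw [logDensityDeriv, div_div_density (by positivity)]
  congr 3
  field_simp

theorem neg_quartic_div_div_density (hμ : μ ≠ 0) (hb : b ≠ 0) (hz : z ≠ 0) :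
    -quartic μ b z / (4 * μ ^ 4 * z ^ 4) / density μ b z =
      -√(π / (8 * μ ^ 8 * b * z ^ 5)) * exp (b * (z - μ) ^ 2 / (2 * μ ^ 2 * z)) *
        quartic μ b z := by
  rw [div_div_density (by positivity), show 2 * π * z ^ 3 / b / (4 * μ ^ 4 * z ^ 4) ^ 2 =
    π / (8 * μ ^ 8 * b * z ^ 5) by field_simp; ring]
  ring

end InverseGaussian

open InverseGaussian

/-- For the inverse Gaussian density `f(z) = √(b/(2πz³))·e^{−b(z−μ)²/(2μ²z)}` on
`(0,∞)`, the function `g = f'/f²` has the closed form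
`g(z) = √(π/(2μ⁴bz))·e^{b(z−μ)²/(2μ²z)}·(b(μ² − z²) − 3μ²z)`, its derivative is
`g'(z) = −√(π/(8μ⁸bz⁵))·e^{b(z−μ)²/(2μ²z)}·(3μ⁴z² + b²(μ² − z²)² + b(6μ²z³ − 2μ⁴z)) < 0`,
and `g` is strictly decreasing on `(0, ∞)`. -/
theorem inverse_gaussian_g_strict_anti
    (μ b : ℝ) (hμ : 0 < μ) (hb : 0 < b)
    (f : ℝ → ℝ)
    (hf : ∀ z ∈ Ioi (0 : ℝ),
      f z = Real.sqrt (b / (2 * Real.pi * z ^ 3)) *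
        Real.exp (-b * (z - μ) ^ 2 / (2 * μ ^ 2 * z))) :
    (∀ z ∈ Ioi (0 : ℝ),
      deriv f z / (f z) ^ 2
        = Real.sqrt (Real.pi / (2 * μ ^ 4 * b * z)) *
            Real.exp (b * (z - μ) ^ 2 / (2 * μ ^ 2 * z)) *
            (b * (μ ^ 2 - z ^ 2) - 3 * μ ^ 2 * z) ∧
      deriv (fun w => deriv f w / (f w) ^ 2) z
        = -Real.sqrt (Real.pi / (8 * μ ^ 8 * b * z ^ 5)) *
            Real.exp (b * (z - μ) ^ 2 / (2 * μ ^ 2 * z)) *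
            (3 * μ ^ 4 * z ^ 2 + b ^ 2 * (μ ^ 2 - z ^ 2) ^ 2 +
              b * (6 * μ ^ 2 * z ^ 3 - 2 * μ ^ 4 * z)) ∧
      deriv (fun w => deriv f w / (f w) ^ 2) z < 0) ∧
    StrictAntiOn (fun z => deriv f z / (f z) ^ 2) (Ioi 0) := by
  have hfd : EqOn f (density μ b) (Ioi 0) := hf
  have hg : EqOn (fun w => deriv f w / f w ^ 2)
      (fun w => logDensityDeriv μ b w / density μ b w) (Ioi 0) := by
    intro w hw
    have hd := (hasDerivAt_density hμ.ne' hb hw).congr_of_eventuallyEq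
      (hfd.eventuallyEq_of_mem (isOpen_Ioi.mem_nhds hw))
    have hw0 : density μ b w ≠ 0 := (density_pos hb hw).ne'
    simp only [hd.deriv, hfd hw]
    field_simp
  have hg' : ∀ z ∈ Ioi (0 : ℝ), HasDerivAt (fun w => deriv f w / f w ^ 2)
      (-quartic μ b z / (4 * μ ^ 4 * z ^ 4) / density μ b z) z := fun z hz =>
    ((hasDerivAt_logDensityDeriv hμ.ne' (ne_of_gt hz)).div_of_hasDerivAt_eq_mul
      (hasDerivAt_density hμ.ne' hb hz) (density_pos hb hz).ne').congr_of_eventuallyEq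
      (hg.eventuallyEq_of_mem (isOpen_Ioi.mem_nhds hz))
  have hneg : ∀ z ∈ Ioi (0 : ℝ), deriv (fun w => deriv f w / f w ^ 2) z < 0 :=
    fun z (hz : 0 < z) => by
      rw [(hg' z hz).deriv]
      exact div_neg_of_neg_of_pos (div_neg_of_neg_of_pos (neg_neg_of_pos (quartic_pos hμ hb hz))
        (by positivity)) (density_pos hb hz)
  refine ⟨fun z hz => ⟨?_, ?_, hneg z hz⟩, strictAntiOn_of_deriv_neg (convex_Ioi 0)
    (fun z hz => (hg' z hz).continuousAt.continuousWithinAt) (by rwa [interior_Ioi])⟩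
  · exact (hg hz).trans (logDensityDeriv_div_density hμ.ne' hb.ne' (ne_of_gt hz))
  · rw [(hg' z hz).deriv, neg_quartic_div_div_density hμ.ne' hb.ne' (ne_of_gt hz), quartic]
end
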